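/- arXiv:1303.6830 — 2 statements merged into one kernel-verified Lean document; each statement's English description precedes it below -/
import Mathlib

section
/- Let 0 < u ≤ v < 1. Then ∫_u^v e^{-1/(2z)}·√(z/(1−z)) dz = √(π/(2e))·( erf(√((1−u)/(2u))) − erf(√((1−v)/(2v))) ) + e^{-1/(2u)}·√(u(1−u)) − e^{-1/(2v)}·√(v(1−v)), where erf(x) = (2/√π)∫_0^x e^{-t²} dt. -/
/-- The error function erf(x) = (2/√π)∫_0^x e^{-t²} dt. -/
noncomputable def errf (x : ℝ) : ℝ :=
  (2 / Real.sqrt Real.pi) * ∫ t in (0 : ℝ)..x, Real.exp (-t ^ 2)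

/-- Optimal homodyne scale density Q(z) = e^{-1/(2z)}·√(z/(1−z)). -/
noncomputable def Qhom (z : ℝ) : ℝ :=
  Real.exp (-1 / (2 * z)) * Real.sqrt (z / (1 - z))

/-!
The right-hand side is `G v - G u` for
`G z = -√(π/(2e)) erf w - e^{-1/(2z)} √(z(1-z))` with `w = √((1-z)/(2z))`, so it suffices to
check `G' = Q` on `(0, 1)`. The point is that `e^{-w²} = √e · e^{-1/(2z)}`: the erf term of `G` then
contributes `e^{-1/(2z)} / (2z√(z(1-z)))`, the product term
`-e^{-1/(2z)} (1 - 2z²) / (2z√(z(1-z)))`, and their sum is `e^{-1/(2z)} z / √(z(1-z)) = Q z`.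
-/

open Real Set

theorem hasDerivAt_errf (x : ℝ) : HasDerivAt errf (2 / √π * exp (-x ^ 2)) x := by
  have hc : Continuous fun t : ℝ => exp (-t ^ 2) := by fun_prop
  exact (intervalIntegral.integral_hasDerivAt_right (hc.intervalIntegrable 0 x)
    (hc.stronglyMeasurableAtFilter _ _) hc.continuousAt).const_mul _

theorem sqrt_one_sub_div_two_mul {z : ℝ} (hz₀ : 0 < z) :
    √((1 - z) / (2 * z)) = √(z * (1 - z)) / (√2 * z) := by
  rw [← sqrt_sq hz₀.le, ← sqrt_mul zero_le_two, ← sqrt_div' _ (by positivity), sqrt_sq hz₀.le]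
  congr 1
  field_simp

theorem exp_neg_sq_sqrt_one_sub_div_two_mul {z : ℝ} (hz₀ : 0 < z) (hz₁ : z < 1) :
    exp (-√((1 - z) / (2 * z)) ^ 2) = √(exp 1) * exp (-1 / (2 * z)) := by
  rw [sq_sqrt (div_nonneg (by linarith) (by positivity)), ← exp_half, ← exp_add]
  congr 1
  field_simp
  ring

theorem hasDerivAt_errf_sqrt_one_sub_div_two_mul {z : ℝ} (hz₀ : 0 < z) (hz₁ : z < 1) :
    HasDerivAt (fun z => √(π / (2 * exp 1)) * errf √((1 - z) / (2 * z)))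
      (-(exp (-1 / (2 * z)) / (2 * z * √(z * (1 - z))))) z := by
  have hw : 0 < (1 - z) / (2 * z) := div_pos (by linarith) (by positivity)
  have hratio : HasDerivAt (fun z : ℝ => (1 - z) / (2 * z)) (-1 / (2 * z ^ 2)) z := by
    refine (((hasDerivAt_id' z).const_sub 1).fun_div ((hasDerivAt_id' z).const_mul 2)
      (by positivity)).congr_deriv ?_
    field_simp
    ring
  refine (((hasDerivAt_errf _).comp z ((hasDerivAt_sqrt hw.ne').comp z hratio)).const_mul
    √(π / (2 * exp 1))).congr_deriv ?_
  simp only [Function.comp_apply]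
  have hs : 0 < √(z * (1 - z)) := sqrt_pos.2 (mul_pos hz₀ (by linarith))
  rw [exp_neg_sq_sqrt_one_sub_div_two_mul hz₀ hz₁, sqrt_one_sub_div_two_mul hz₀,
    sqrt_div' _ (by positivity), sqrt_mul' _ (exp_pos 1).le]
  have := sqrt_pos.2 pi_pos
  have := sqrt_pos.2 (exp_pos 1)
  have : √2 ^ 2 = 2 := sq_sqrt zero_le_two
  field_simp

theorem hasDerivAt_exp_mul_sqrt {z : ℝ} (hz₀ : 0 < z) (hz₁ : z < 1) :
    HasDerivAt (fun z => exp (-1 / (2 * z)) * √(z * (1 - z)))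
      (exp (-1 / (2 * z)) * (1 - 2 * z ^ 2) / (2 * z * √(z * (1 - z)))) z := by
  have hs : 0 < z * (1 - z) := mul_pos hz₀ (by linarith)
  have hexp : HasDerivAt (fun z : ℝ => -1 / (2 * z)) (1 / (2 * z ^ 2)) z := by
    refine ((hasDerivAt_const z (-1 : ℝ)).fun_div ((hasDerivAt_id' z).const_mul 2)
      (by positivity)).congr_deriv ?_
    field_simp
    ring
  have hpoly : HasDerivAt (fun z : ℝ => z * (1 - z)) (1 - 2 * z) z := by
    refine ((hasDerivAt_id' z).fun_mul ((hasDerivAt_id' z).const_sub 1)).congr_deriv ?_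
    ring
  refine (hexp.exp.fun_mul ((hasDerivAt_sqrt hs.ne').comp z hpoly)).congr_deriv ?_
  have hsq := sq_sqrt hs.le
  have := sqrt_pos.2 hs
  simp only [Function.comp_apply]
  field_simp
  linear_combination hsq

theorem continuousOn_Qhom : ContinuousOn Qhom (Ioo 0 1) := by
  unfold Qhom
  fun_prop (disch := intro z hz; simp only [mem_Ioo] at hz; first | positivity | linarith)

noncomputable def homScaleAntideriv (z : ℝ) : ℝ :=
  -(√(π / (2 * exp 1)) * errf √((1 - z) / (2 * z))) - exp (-1 / (2 * z)) * √(z * (1 - z))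

theorem hasDerivAt_homScaleAntideriv {z : ℝ} (hz₀ : 0 < z) (hz₁ : z < 1) :
    HasDerivAt homScaleAntideriv (Qhom z) z := by
  refine ((hasDerivAt_errf_sqrt_one_sub_div_two_mul hz₀ hz₁).fun_neg.fun_sub
    (hasDerivAt_exp_mul_sqrt hz₀ hz₁)).congr_deriv ?_
  have h₁ : 0 < 1 - z := by linarith
  rw [Qhom, sqrt_div' _ h₁.le, sqrt_mul hz₀.le]
  have := sqrt_pos.2 hz₀
  have := sqrt_pos.2 h₁
  have hsq := sq_sqrt hz₀.le
  field_simp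
  linear_combination -(2 * z) * hsq

/-- Explicit antiderivative formula for the optimal homodyne scale integral:
∫_u^v e^{-1/(2z)}√(z/(1−z)) dz
  = √(π/(2e))(erf(√((1−u)/(2u))) − erf(√((1−v)/(2v))))
    + e^{-1/(2u)}√(u(1−u)) − e^{-1/(2v)}√(v(1−v)). -/
theorem hom_scale_integral (u v : ℝ) (hu : 0 < u) (huv : u ≤ v) (hv : v < 1) :
    ∫ z in u..v, Qhom z =
      Real.sqrt (Real.pi / (2 * Real.exp 1)) *
        (errf (Real.sqrt ((1 - u) / (2 * u)))
          - errf (Real.sqrt ((1 - v) / (2 * v))))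
      + Real.exp (-1 / (2 * u)) * Real.sqrt (u * (1 - u))
      - Real.exp (-1 / (2 * v)) * Real.sqrt (v * (1 - v)) := by
  have hsub : uIcc u v ⊆ Ioo 0 1 := by
    rw [uIcc_of_le huv]
    exact Icc_subset_Ioo hu hv
  rw [intervalIntegral.integral_eq_sub_of_hasDerivAt
    (fun z hz => hasDerivAt_homScaleAntideriv (hsub hz).1 (hsub hz).2)
    ((continuousOn_Qhom.mono hsub).intervalIntegrable), homScaleAntideriv, homScaleAntideriv]
  ring
end

section
/- Let γ > 0 and 0 < a < b < 1. Define S(u,v) = ∫_u^v e^{-1/z}·z/(1−z) dz and P(y) = S(a,y)/S(a,b) for y ∈ [a,b]. Then P(a) = 0, P(b) = 1, P is strictly increasing on [a,b], and for every y ∈ (a,b), P is twice differentiable at y with −γ y·P'(y) + γ y³(1−y)·P''(y) = 0. -/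
/-!
`Shet a ·` is the integral of the scale density `Qhet`, which is continuous and positive on
`(0, 1)`, so `P` is a normalised, strictly increasing primitive with `P' = Qhet / Shet a b`.
The adjoint equation then reduces to the first-order equation `z³(1 - z) Q' = z Q` for the
scale density, which holds because `(log Qhet)' = 1/z² + 1/z + 1/(1 - z) = 1/(z²(1 - z))`.
-/

/-- Heterodyne scale density Q(z) = e^{-1/z}·z/(1−z). -/
noncomputable def Qhet (z : ℝ) : ℝ := Real.exp (-1 / z) * z / (1 - z)

/-- Heterodyne scale integral S(u,v) = ∫_u^v Q(z) dz. -/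
noncomputable def Shet (u v : ℝ) : ℝ := ∫ z in u..v, Qhet z

open Set Filter Topology MeasureTheory intervalIntegral

section Primitive

variable {Q : ℝ → ℝ} {a b : ℝ}

theorem strictMonoOn_integral_of_pos (hQ : ContinuousOn Q (Icc a b))
    (hpos : ∀ z ∈ Ioo a b, 0 < Q z) : StrictMonoOn (fun y => ∫ z in a..y, Q z) (Icc a b) := by
  have hint : ∀ u ∈ Icc a b, ∀ v ∈ Icc a b, IntervalIntegrable Q volume u v :=
    fun u hu v hv => (hQ.mono (uIcc_subset_Icc hu hv)).intervalIntegrable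
  intro x hx y hy hxy
  have hxy_pos : 0 < ∫ z in x..y, Q z :=
    intervalIntegral_pos_of_pos_on (hint x hx y hy)
      (fun z hz => hpos z ⟨hx.1.trans_lt hz.1, hz.2.trans_le hy.2⟩) hxy
  have hmem : a ∈ Icc a b := left_mem_Icc.2 (hx.1.trans hx.2)
  have hsplit := integral_interval_sub_left (hint a hmem y hy) (hint a hmem x hx)
  exact sub_pos.1 (hsplit ▸ hxy_pos)

theorem hasDerivAt_integral_of_mem_Ioo (hQ : ContinuousOn Q (Icc a b)) {y : ℝ}
    (hy : y ∈ Ioo a b) : HasDerivAt (fun t => ∫ z in a..t, Q z) (Q y) y := by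
  have hcont : ContinuousOn Q (Ioo a b) := hQ.mono Ioo_subset_Icc_self
  refine integral_hasDerivAt_right ?_ (hcont.stronglyMeasurableAtFilter isOpen_Ioo y hy)
    (hcont.continuousAt (Ioo_mem_nhds hy.1 hy.2))
  exact (hQ.mono (uIcc_subset_Icc (left_mem_Icc.2 (hy.1.trans hy.2).le)
    (Ioo_subset_Icc_self hy))).intervalIntegrable

theorem hasDerivAt_deriv_integral_of_mem_Ioo (hQ : ContinuousOn Q (Icc a b)) {y q : ℝ}
    (hy : y ∈ Ioo a b) (hQy : HasDerivAt Q q y) :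
    HasDerivAt (deriv fun t => ∫ z in a..t, Q z) q y := by
  refine hQy.congr_of_eventuallyEq ?_
  filter_upwards [Ioo_mem_nhds hy.1 hy.2] with t ht
  exact (hasDerivAt_integral_of_mem_Ioo hQ ht).deriv

end Primitive

theorem Qhet_pos {z : ℝ} (hz : z ∈ Ioo (0 : ℝ) 1) : 0 < Qhet z :=
  div_pos (mul_pos (Real.exp_pos _) hz.1) (sub_pos.2 hz.2)

theorem hasDerivAt_Qhet {z : ℝ} (hz : z ∈ Ioo (0 : ℝ) 1) :
    HasDerivAt Qhet (Qhet z / (z ^ 2 * (1 - z))) z := by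
  have hz0 : z ≠ 0 := hz.1.ne'
  have hz1 : 1 - z ≠ 0 := (sub_pos.2 hz.2).ne'
  have hexp : HasDerivAt (fun t => Real.exp (-1 / t)) (Real.exp (-1 / z) * (z ^ 2)⁻¹) z := by
    have hinv : HasDerivAt (fun t : ℝ => -1 / t) (z ^ 2)⁻¹ z := by
      simpa only [neg_div, one_div, neg_neg] using (hasDerivAt_inv hz0).fun_neg
    exact (Real.hasDerivAt_exp _).comp z hinv
  refine ((hexp.mul (hasDerivAt_id' z)).div ((hasDerivAt_id' z).const_sub 1) hz1).congr_deriv ?_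
  simp only [Qhet, Pi.mul_apply]
  field_simp
  ring

theorem continuousOn_Qhet : ContinuousOn Qhet (Ioo 0 1) := fun _ hz =>
  (hasDerivAt_Qhet hz).continuousAt.continuousWithinAt

theorem het_hit_prob_general (γ a b : ℝ) (ha : 0 < a) (hab : a < b)
    (hb : b < 1) :
    let P : ℝ → ℝ := fun y => Shet a y / Shet a b
    P a = 0 ∧ P b = 1 ∧ StrictMonoOn P (Set.Icc a b) ∧
    ∀ y ∈ Set.Ioo a b, ∃ p' p'' : ℝ,
      HasDerivAt P p' y ∧ HasDerivAt (deriv P) p'' y ∧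
      -γ * y * p' + γ * y ^ 3 * (1 - y) * p'' = 0 := by
  intro P
  have hsub : Icc a b ⊆ Ioo 0 1 := Icc_subset_Ioo ha hb
  have hQ : ContinuousOn Qhet (Icc a b) := continuousOn_Qhet.mono hsub
  have hmono :=
    strictMonoOn_integral_of_pos hQ fun z hz => Qhet_pos (hsub (Ioo_subset_Icc_self hz))
  have hS : 0 < Shet a b := by
    simpa [Shet] using hmono (left_mem_Icc.2 hab.le) (right_mem_Icc.2 hab.le) hab
  refine ⟨by simp [P, Shet], div_self hS.ne', fun x hx y hy hxy => div_lt_div_of_pos_right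
    (hmono hx hy hxy) hS, fun y hy => ?_⟩
  have hy' : y ∈ Ioo (0 : ℝ) 1 := hsub (Ioo_subset_Icc_self hy)
  have hP' : HasDerivAt P (Qhet y / Shet a b) y :=
    (hasDerivAt_integral_of_mem_Ioo hQ hy).div_const _
  have hP'' : HasDerivAt (deriv P) (Qhet y / (y ^ 2 * (1 - y)) / Shet a b) y := by
    rw [show deriv P = fun t => deriv (Shet a) t / Shet a b from funext fun t => deriv_div_const _]
    exact (hasDerivAt_deriv_integral_of_mem_Ioo hQ hy (hasDerivAt_Qhet hy')).div_const _
  refine ⟨_, _, hP', hP'', ?_⟩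
  have hy1 : 1 - y ≠ 0 := (sub_pos.2 hy'.2).ne'
  field_simp [hy'.1.ne']
  ring

/-- P(y) = S(a,y)/S(a,b), the probability under heterodyne detection that the
excited state population starting from y ∈ [a,b] hits b before a, satisfies
P(a) = 0, P(b) = 1, is strictly increasing on [a,b], and solves the adjoint
equation −γy P'(y) + γy³(1−y) P''(y) = 0 on (a,b). -/
theorem het_hit_prob (γ a b : ℝ) (hγ : 0 < γ) (ha : 0 < a) (hab : a < b)
    (hb : b < 1) :
    let P : ℝ → ℝ := fun y => Shet a y / Shet a b
    P a = 0 ∧ P b = 1 ∧ StrictMonoOn P (Set.Icc a b) ∧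
    ∀ y ∈ Set.Ioo a b, ∃ p' p'' : ℝ,
      HasDerivAt P p' y ∧ HasDerivAt (deriv P) p'' y ∧
      -γ * y * p' + γ * y ^ 3 * (1 - y) * p'' = 0 :=
  het_hit_prob_general γ a b ha hab hb
end
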